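/- arXiv:1907.11160 — 2 statements merged into one kernel-verified Lean document; each statement's English description precedes it below -/
import Mathlib

section
/- Let k : [0,1] → ℝ be continuous, differentiable on (0,1], with k > 0 on (0,1], k(0) = 0, and suppose there exists M ∈ (0,1) such that x·k'(x) ≤ M·k(x) for all x ∈ (0,1]. Then the function x ↦ x/k(x) is integrable on (0,1), i.e. ∫₀¹ x/k(x) dx < ∞. -/
open Set MeasureTheory

/-- Weak degeneracy at 0 with M ∈ (0,1) implies x/k(x) is integrable on (0,1). -/
theorem stmt_4 (k k' : ℝ → ℝ) (M : ℝ) (hM : M ∈ Set.Ioo (0:ℝ) 1)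
    (hcont : ContinuousOn k (Set.Icc 0 1))
    (hder : ∀ x ∈ Set.Ioc (0:ℝ) 1, HasDerivAt k (k' x) x)
    (hpos : ∀ x ∈ Set.Ioc (0:ℝ) 1, 0 < k x)
    (hk0 : k 0 = 0)
    (hineq : ∀ x ∈ Set.Ioc (0:ℝ) 1, x * k' x ≤ M * k x) :
    MeasureTheory.IntegrableOn (fun x => x / k x) (Set.Ioo 0 1) MeasureTheory.volume := by
  obtain ⟨hM0, hM1⟩ := hM
  have hk1 : 0 < k 1 := hpos 1 ⟨one_pos, le_refl 1⟩
  set g : ℝ → ℝ := fun x => k x / x ^ M with hg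
  have hd : ∀ x ∈ interior (Set.Ioc (0:ℝ) 1), HasDerivAt g
      ((k' x * x ^ M - k x * (M * x ^ (M - 1))) / (x ^ M) ^ 2) x := by
    intro x hx
    rw [interior_Ioc] at hx
    have hx0 : (0:ℝ) < x := hx.1
    have hxI : x ∈ Set.Ioc (0:ℝ) 1 := ⟨hx.1, le_of_lt hx.2⟩
    have hpow : HasDerivAt (fun y : ℝ => y ^ M) (M * x ^ (M - 1)) x :=
      Real.hasDerivAt_rpow_const (Or.inl hx0.ne')
    exact (hder x hxI).div hpow (Real.rpow_pos_of_pos hx0 M).ne'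
  have hganti : AntitoneOn g (Set.Ioc 0 1) := by
    apply antitoneOn_of_deriv_nonpos (convex_Ioc 0 1)
    · apply ContinuousOn.div
      · exact hcont.mono Set.Ioc_subset_Icc_self
      · exact fun x hx =>
          (Real.continuousAt_rpow_const x M (Or.inl hx.1.ne')).continuousWithinAt
      · exact fun x hx => (Real.rpow_pos_of_pos hx.1 M).ne'
    · exact fun x hx => (hd x hx).differentiableAt.differentiableWithinAt
    · intro x hx
      rw [(hd x hx).deriv]
      rw [interior_Ioc] at hx
      have hx0 : (0:ℝ) < x := hx.1
      have hxI : x ∈ Set.Ioc (0:ℝ) 1 := ⟨hx.1, le_of_lt hx.2⟩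
      apply div_nonpos_of_nonpos_of_nonneg _ (sq_nonneg _)
      have key : k' x * x ^ M ≤ k x * (M * x ^ (M - 1)) := by
        have hsplit : x ^ M = x * x ^ (M - 1) := by
          rw [show M = 1 + (M - 1) by ring, Real.rpow_add hx0, Real.rpow_one]
          ring_nf
        rw [hsplit]
        have := mul_le_mul_of_nonneg_right (hineq x hxI)
          (Real.rpow_nonneg hx0.le (M - 1))
        nlinarith [this]
      linarith
  have hlow : ∀ x ∈ Set.Ioc (0:ℝ) 1, k 1 * x ^ M ≤ k x := by
    intro x hx
    have := hganti hx ⟨one_pos, le_refl 1⟩ hx.2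
    have hg1 : g 1 = k 1 := by simp [hg]
    rw [hg1] at this
    have hxp : (0:ℝ) < x ^ M := Real.rpow_pos_of_pos hx.1 M
    calc k 1 * x ^ M ≤ (k x / x ^ M) * x ^ M :=
          mul_le_mul_of_nonneg_right this hxp.le
      _ = k x := div_mul_cancel₀ _ hxp.ne'
  have hgint : IntegrableOn (fun x : ℝ => x ^ (1 - M) / k 1) (Set.Ioo 0 1) volume := by
    have h1 : IntervalIntegrable (fun x : ℝ => x ^ (1 - M)) volume 0 1 :=
      intervalIntegral.intervalIntegrable_rpow' (by linarith)
    have h2 : IntegrableOn (fun x : ℝ => x ^ (1 - M)) (Set.Ioc 0 1) volume :=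
      (intervalIntegrable_iff_integrableOn_Ioc_of_le zero_le_one).mp h1
    exact (h2.mono_set Set.Ioo_subset_Ioc_self).div_const _
  apply hgint.integrable.mono'
  · apply ContinuousOn.aestronglyMeasurable _ measurableSet_Ioo
    apply ContinuousOn.div continuousOn_id (hcont.mono Set.Ioo_subset_Icc_self)
    exact fun x hx => (hpos x ⟨hx.1, hx.2.le⟩).ne'
  · rw [ae_restrict_iff' measurableSet_Ioo]
    filter_upwards with x hx
    have hxI : x ∈ Set.Ioc (0:ℝ) 1 := ⟨hx.1, hx.2.le⟩
    have hkx : 0 < k x := hpos x hxI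
    have hxp : (0:ℝ) < x ^ M := Real.rpow_pos_of_pos hx.1 M
    have h1 : 0 < k 1 * x ^ M := mul_pos hk1 hxp
    rw [Real.norm_eq_abs, abs_of_nonneg (div_nonneg hx.1.le hkx.le)]
    calc x / k x ≤ x / (k 1 * x ^ M) :=
          div_le_div_of_nonneg_left hx.1.le h1 (hlow x hxI)
      _ = x ^ (1 - M) / k 1 := by
          rw [Real.rpow_sub hx.1, Real.rpow_one, div_div, mul_comm]
end

section
/- Let k : [0,1] → ℝ satisfy k > 0 on (0,1], k(0) = 0, be continuous and differentiable on (0,1] with x·k'(x) ≤ M·k(x) on (0,1] for some M ∈ (0,2), and fix R > 0. Then the function p(x) = ∫₀ˣ (y/k(y))·e^{R y²} dy is well-defined, finite, nonnegative, and nondecreasing on [0,1], with p(0) = 0. -/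
/-!
The growth condition `x k' ≤ M k` says that `k x / x ^ M` is nonincreasing, so
`k y ≥ k 1 * y ^ M` on `(0, 1]`. Hence `y / k y ≤ y ^ (1 - M) / k 1`, which is integrable
at `0` because `M < 2`, and the factor `exp (R y²)` is continuous on the compact `[0, 1]`.
Nonnegativity and monotonicity of `p` come from the nonnegativity of the integrand.
-/

open Set MeasureTheory intervalIntegral

theorem antitoneOn_div_rpow_of_mul_deriv_le {k k' : ℝ → ℝ} {M a b : ℝ} (ha : 0 < a)
    (hder : ∀ x ∈ Icc a b, HasDerivAt k (k' x) x)
    (hineq : ∀ x ∈ Ioo a b, x * k' x ≤ M * k x) :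
    AntitoneOn (fun x => k x / x ^ M) (Icc a b) := by
  have hrpow : ∀ x ∈ Icc a b, HasDerivAt (fun x : ℝ => x ^ M) (M * x ^ (M - 1)) x :=
    fun x hx => Real.hasDerivAt_rpow_const (Or.inl (ha.trans_le hx.1).ne')
  have hquot : ∀ x ∈ Icc a b, HasDerivAt (fun x => k x / x ^ M)
      ((k' x * x ^ M - k x * (M * x ^ (M - 1))) / (x ^ M) ^ 2) x :=
    fun x hx => (hder x hx).div (hrpow x hx) (Real.rpow_pos_of_pos (ha.trans_le hx.1) M).ne'
  refine antitoneOn_of_hasDerivWithinAt_nonpos (convex_Icc a b)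
    (fun x hx => (hquot x hx).continuousAt.continuousWithinAt)
    (fun x hx => (hquot x (interior_subset hx)).hasDerivWithinAt) fun x hx => ?_
  rw [interior_Icc] at hx
  have hx0 : 0 < x := ha.trans hx.1
  have hnum :
      k' x * x ^ M - k x * (M * x ^ (M - 1)) = x ^ (M - 1) * (x * k' x - M * k x) := by
    rw [show x ^ M = x ^ (M - 1) * x by rw [← Real.rpow_add_one hx0.ne']; ring_nf]
    ring
  rw [hnum]
  exact div_nonpos_of_nonpos_of_nonneg (mul_nonpos_of_nonneg_of_nonpos
    (Real.rpow_nonneg hx0.le _) (sub_nonpos.mpr (hineq x hx))) (sq_nonneg _)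

theorem mul_rpow_le_of_mul_deriv_le {k k' : ℝ → ℝ} {M : ℝ}
    (hder : ∀ x ∈ Ioc (0 : ℝ) 1, HasDerivAt k (k' x) x)
    (hineq : ∀ x ∈ Ioc (0 : ℝ) 1, x * k' x ≤ M * k x) {y : ℝ}
    (hy : y ∈ Ioc (0 : ℝ) 1) : k 1 * y ^ M ≤ k y := by
  have hanti := antitoneOn_div_rpow_of_mul_deriv_le hy.1
    (fun x hx => hder x ⟨hy.1.trans_le hx.1, hx.2⟩)
    (fun x hx => hineq x ⟨hy.1.trans hx.1, hx.2.le⟩)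
  have h := hanti ⟨le_rfl, hy.2⟩ ⟨hy.2, le_rfl⟩ hy.2
  simp only [Real.one_rpow, div_one] at h
  rwa [le_div_iff₀ (Real.rpow_pos_of_pos hy.1 M)] at h

theorem integrableOn_div_of_mul_rpow_le {k : ℝ → ℝ} {M c : ℝ} (hM : M < 2) (hc : 0 < c)
    (hk : ContinuousOn k (Ioc 0 1)) (hlb : ∀ y ∈ Ioc (0 : ℝ) 1, c * y ^ M ≤ k y) :
    IntegrableOn (fun y => y / k y) (Ioc 0 1) := by
  have hbound_pos : ∀ y ∈ Ioc (0 : ℝ) 1, 0 < c * y ^ M :=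
    fun y hy => mul_pos hc (Real.rpow_pos_of_pos hy.1 M)
  have hmajorant : IntegrableOn (fun y : ℝ => c⁻¹ * y ^ (1 - M)) (Ioc 0 1) := by
    have h : IntervalIntegrable (fun y : ℝ => y ^ (1 - M)) volume 0 1 :=
      intervalIntegrable_rpow' (by linarith)
    exact ((intervalIntegrable_iff_integrableOn_Ioc_of_le zero_le_one).1 h).const_mul _
  refine hmajorant.mono' ?_ ?_
  · refine (continuousOn_id.div hk fun y hy => ?_).aestronglyMeasurable measurableSet_Ioc
    exact ((hbound_pos y hy).trans_le (hlb y hy)).ne'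
  · filter_upwards [ae_restrict_mem measurableSet_Ioc] with y hy
    have hky : 0 < k y := (hbound_pos y hy).trans_le (hlb y hy)
    rw [Real.norm_eq_abs, abs_of_nonneg (div_nonneg hy.1.le hky.le)]
    calc y / k y ≤ y / (c * y ^ M) :=
          div_le_div_of_nonneg_left hy.1.le (hbound_pos y hy) (hlb y hy)
      _ = c⁻¹ * y ^ (1 - M) := by rw [Real.rpow_sub hy.1, Real.rpow_one]; field_simp

theorem stmt_5_general (k k' : ℝ → ℝ) (M R : ℝ) (hM : M ∈ Set.Ioo (0:ℝ) 2)
    (hder : ∀ x ∈ Set.Ioc (0:ℝ) 1, HasDerivAt k (k' x) x)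
    (hpos : ∀ x ∈ Set.Ioc (0:ℝ) 1, 0 < k x)
    (hineq : ∀ x ∈ Set.Ioc (0:ℝ) 1, x * k' x ≤ M * k x) :
    MeasureTheory.IntegrableOn (fun y => y / k y * Real.exp (R * y ^ 2))
        (Set.Ioo 0 1) MeasureTheory.volume ∧
    (∀ x ∈ Set.Icc (0:ℝ) 1,
      0 ≤ ∫ y in (0:ℝ)..x, y / k y * Real.exp (R * y ^ 2)) ∧
    MonotoneOn (fun x => ∫ y in (0:ℝ)..x, y / k y * Real.exp (R * y ^ 2))
      (Set.Icc 0 1) ∧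
    (∫ y in (0:ℝ)..(0:ℝ), y / k y * Real.exp (R * y ^ 2)) = 0 := by
  set f : ℝ → ℝ := fun y => y / k y * Real.exp (R * y ^ 2)
  have hk : ContinuousOn k (Ioc 0 1) := fun x hx => (hder x hx).continuousAt.continuousWithinAt
  have hdiv : IntegrableOn (fun y => y / k y) (Icc 0 1) := by
    rw [integrableOn_Icc_iff_integrableOn_Ioc]
    exact integrableOn_div_of_mul_rpow_le hM.2 (hpos 1 ⟨one_pos, le_rfl⟩) hk
      fun y hy => mul_rpow_le_of_mul_deriv_le hder hineq hy
  have hint : IntegrableOn f (Icc 0 1) := hdiv.mul_continuousOn (by fun_prop) isCompact_Icc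
  have hnonneg : ∀ y ∈ Icc (0 : ℝ) 1, 0 ≤ f y := by
    rintro y ⟨hy0, hy1⟩
    rcases hy0.eq_or_lt with rfl | hy0
    · simp [f]
    · exact mul_nonneg (div_nonneg hy0.le (hpos y ⟨hy0, hy1⟩).le) (Real.exp_nonneg _)
  refine ⟨hint.mono_set Ioo_subset_Icc_self,
    fun x hx => integral_nonneg hx.1 fun y hy => hnonneg y ⟨hy.1, hy.2.trans hx.2⟩,
    fun a ha b hb hab => integral_mono_interval le_rfl ha.1 hab ?_ ?_, integral_same⟩
  · filter_upwards [ae_restrict_mem measurableSet_Ioc] with y hy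
    exact hnonneg y ⟨hy.1.le, hy.2.trans hb.2⟩
  · exact (intervalIntegrable_iff_integrableOn_Icc_of_le hb.1).2
      (hint.mono_set (Icc_subset_Icc_right hb.2))

/-- The weight p(x) = ∫₀ˣ (y/k(y)) e^{R y²} dy is well-defined, finite,
nonnegative and nondecreasing on [0,1], with p(0) = 0. -/
theorem stmt_5 (k k' : ℝ → ℝ) (M R : ℝ) (hM : M ∈ Set.Ioo (0:ℝ) 2) (hR : 0 < R)
    (hcont : ContinuousOn k (Set.Icc 0 1))
    (hder : ∀ x ∈ Set.Ioc (0:ℝ) 1, HasDerivAt k (k' x) x)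
    (hpos : ∀ x ∈ Set.Ioc (0:ℝ) 1, 0 < k x)
    (hk0 : k 0 = 0)
    (hineq : ∀ x ∈ Set.Ioc (0:ℝ) 1, x * k' x ≤ M * k x) :
    MeasureTheory.IntegrableOn (fun y => y / k y * Real.exp (R * y ^ 2))
        (Set.Ioo 0 1) MeasureTheory.volume ∧
    (∀ x ∈ Set.Icc (0:ℝ) 1,
      0 ≤ ∫ y in (0:ℝ)..x, y / k y * Real.exp (R * y ^ 2)) ∧
    MonotoneOn (fun x => ∫ y in (0:ℝ)..x, y / k y * Real.exp (R * y ^ 2))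
      (Set.Icc 0 1) ∧
    (∫ y in (0:ℝ)..(0:ℝ), y / k y * Real.exp (R * y ^ 2)) = 0 :=
  stmt_5_general k k' M R hM hder hpos hineq
end
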